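/- Let p ∈ (0,1), let K be a p-core CRG, and let x be a nonnegative weight vector summing to 1 attaining the minimum g_K(p). If p ≤ 1/2, then x(v) = g_K(p)/p for every white vertex v, and d_G(v) = (p − g_K(p))/p + ((1−2p)/p)·x(v) for every black vertex v. If p ≥ 1/2, then x(v) = g_K(p)/(1−p) for every black vertex v, and d_G(v) = (1 − p − g_K(p))/(1−p) + ((2p−1)/(1−p))·x(v) for every white vertex v. -/

import Mathlib

/-- Colors for edges of a colored regularity graph. -/
inductive EColor : Type
  | white
  | gray
  | black
deriving DecidableEq

/-- A colored regularity graph (CRG) on a finite vertex type `V`: each vertex is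
white or black (`vWhite v = true` means white), and each pair of distinct vertices
gets a symmetric edge color (white, gray or black). -/
structure CRG (V : Type) [Fintype V] where
  vWhite : V → Bool
  ecolor : V → V → EColor
  ecolor_symm : ∀ u v, ecolor u v = ecolor v u

namespace CRG

variable {V : Type} [Fintype V] [DecidableEq V]

/-- The matrix `M_K(p)`. -/
noncomputable def M (K : CRG V) (p : ℝ) (u v : V) : ℝ :=
  if u = v then (if K.vWhite u then p else 1 - p)
  else
    match K.ecolor u v with
    | EColor.white => p
    | EColor.black => 1 - p
    | EColor.gray => 0

/-- The function `g_K(p)`: the minimum of `xᵀ M_K(p) x` over nonnegative weight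
vectors summing to `1`. -/
noncomputable def g (K : CRG V) (p : ℝ) : ℝ :=
  sInf {r : ℝ | ∃ x : V → ℝ, (∀ v, 0 ≤ x v) ∧ (∑ v, x v) = 1 ∧
    r = ∑ u, ∑ v, x u * K.M p u v * x v}

/-- The sub-CRG induced on a subset `s` of the vertices. -/
def sub (K : CRG V) (s : Finset V) : CRG {v // v ∈ s} where
  vWhite := fun v => K.vWhite v.1
  ecolor := fun u v => K.ecolor u.1 v.1
  ecolor_symm := fun u v => K.ecolor_symm u.1 v.1

/-- `K` is `p`-core if `g_K(p) < g_{K'}(p)` for every proper (nonempty) sub-CRG `K'`. -/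
def IsPCore (K : CRG V) (p : ℝ) : Prop :=
  ∀ s : Finset V, s.Nonempty → s ≠ Finset.univ → K.g p < (K.sub s).g p

/-- `x` is an optimal weight vector for `K` at `p`. -/
def IsOptWeight (K : CRG V) (p : ℝ) (x : V → ℝ) : Prop :=
  (∀ v, 0 ≤ x v) ∧ (∑ v, x v) = 1 ∧
    (∑ u, ∑ v, x u * K.M p u v * x v) = K.g p

/-- The gray degree `d_G(v)`: total weight of gray neighbors of `v`. -/
noncomputable def dG (K : CRG V) (x : V → ℝ) (v : V) : ℝ :=
  ∑ w ∈ Finset.univ.filter fun w => w ≠ v ∧ K.ecolor v w = EColor.gray, x w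

/-- The white degree `d_W(v)`: total weight of white neighbors of `v`, including `v`
itself if `v` is white. -/
noncomputable def dW (K : CRG V) (x : V → ℝ) (v : V) : ℝ :=
  (∑ w ∈ Finset.univ.filter fun w => w ≠ v ∧ K.ecolor v w = EColor.white, x w) +
    (if K.vWhite v then x v else 0)

/-- The black degree `d_B(v)`: total weight of black neighbors of `v`, including `v`
itself if `v` is black. -/
noncomputable def dB (K : CRG V) (x : V → ℝ) (v : V) : ℝ :=
  (∑ w ∈ Finset.univ.filter fun w => w ≠ v ∧ K.ecolor v w = EColor.black, x w) +
    (if K.vWhite v then 0 else x v)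

/-- The number of gray neighbors of `v`. -/
def grayDeg (K : CRG V) (v : V) : ℕ :=
  (Finset.univ.filter fun w => w ≠ v ∧ K.ecolor v w = EColor.gray).card

end CRG

/-- A graph `H` embeds in a CRG `K`, written `H ↦ K`. -/
def EmbedsIn {α : Type*} {V : Type} [Fintype V] (H : SimpleGraph α) (K : CRG V) : Prop :=
  ∃ φ : α → V,
    (∀ a b : α, H.Adj a b →
      (φ a = φ b ∧ K.vWhite (φ a) = false) ∨
      (φ a ≠ φ b ∧ (K.ecolor (φ a) (φ b) = EColor.black ∨ K.ecolor (φ a) (φ b) = EColor.gray))) ∧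
    (∀ a b : α, a ≠ b → ¬H.Adj a b →
      (φ a = φ b ∧ K.vWhite (φ a) = true) ∨
      (φ a ≠ φ b ∧ (K.ecolor (φ a) (φ b) = EColor.white ∨ K.ecolor (φ a) (φ b) = EColor.gray)))

/-!
An optimal weighting `x` of a `p`-core CRG is strictly positive: restricted to its support it
would witness `g_{K'}(p) ≤ g_K(p)` for a proper sub-CRG `K'`. So `x` is an interior minimiser of
the quadratic form of `M = M_K(p)` on the simplex, whence `(M x)(v) = g_K(p)` for every `v`, and
`M` is positive definite on vectors with coordinate sum `0`: along a direction `d` with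
`dᵀ M d = 0` the form is constant, and moving `x` along `d` until a coordinate vanishes would give
an optimal weighting with a zero entry.

For `p ≤ 1/2`, testing this positivity on `e_u - e_v` excludes black edges, and testing it on
`S e_u - x|_N`, where `N` is the white neighbourhood of a white vertex `u` and `S = x(N)`,
excludes white edges at white vertices. The row equations `(M x)(v) = g_K(p)` then read
`g = p x(v)` at white `v` and `g = (1 - p) x(v) + p d_W(v)` at black `v`, and
`d_W + d_B + d_G = 1` gives the formula for `d_G`. Exchanging black and white turns `M_K(p)`
into `M_K(1 - p)`, which reduces `p ≥ 1/2` to `p ≤ 1/2`.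
-/

open Finset Matrix Filter Topology

namespace Matrix

variable {V : Type*} [Fintype V] {A : Matrix V V ℝ}

def PosDefOnSumZero (A : Matrix V V ℝ) : Prop :=
  ∀ d : V → ℝ, ∑ v, d v = 0 → d ≠ 0 → 0 < d ⬝ᵥ A *ᵥ d

lemma IsSymm.dotProduct_mulVec_comm (hA : A.IsSymm) (a b : V → ℝ) :
    a ⬝ᵥ A *ᵥ b = b ⬝ᵥ A *ᵥ a := by
  rw [dotProduct_mulVec, ← mulVec_transpose, hA.eq, dotProduct_comm]

lemma IsSymm.dotProduct_mulVec_add_smul (hA : A.IsSymm) (x d : V → ℝ) (t : ℝ) :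
    (x + t • d) ⬝ᵥ A *ᵥ (x + t • d) =
      x ⬝ᵥ A *ᵥ x + 2 * t * (d ⬝ᵥ A *ᵥ x) + t ^ 2 * (d ⬝ᵥ A *ᵥ d) := by
  simp only [mulVec_add, mulVec_smul, add_dotProduct, dotProduct_add, smul_dotProduct,
    dotProduct_smul, smul_eq_mul, hA.dotProduct_mulVec_comm x d]
  ring

lemma dotProduct_mulVec_restrict_le [DecidableEq V] (hA : ∀ i j, 0 ≤ A i j) {x : V → ℝ}
    (hx : ∀ v, 0 ≤ x v) {N : Finset V} {u : V} (hu : u ∉ N) :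
    (fun z => if z ∈ N then x z else 0) ⬝ᵥ A *ᵥ (fun z => if z ∈ N then x z else 0) ≤
      ∑ z ∈ N, x z * ((A *ᵥ x) z - A z u * x u) := by
  have hrow (z : V) :
      (A *ᵥ fun z => if z ∈ N then x z else 0) z + A z u * x u ≤ (A *ᵥ x) z :=
    calc (A *ᵥ fun z => if z ∈ N then x z else 0) z + A z u * x u
        = ∑ w ∈ insert u N, A z w * x w := by
          simp [mulVec, dotProduct, mul_ite, sum_ite_mem, sum_insert hu, add_comm]
      _ ≤ (A *ᵥ x) z := sum_le_sum_of_subset_of_nonneg (subset_univ _)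
          fun w _ _ => mul_nonneg (hA z w) (hx w)
  simp only [dotProduct, ite_mul, zero_mul, sum_ite_mem, univ_inter]
  exact sum_le_sum fun z _ => mul_le_mul_of_nonneg_left (by linarith [hrow z]) (hx z)

end Matrix

section StdSimplex

variable {V : Type*} [Fintype V] {x d : V → ℝ}

lemma add_smul_mem_stdSimplex (hx : x ∈ stdSimplex ℝ V) (hd : ∑ v, d v = 0) {t : ℝ}
    (ht : ∀ v, 0 ≤ x v + t * d v) : x + t • d ∈ stdSimplex ℝ V :=
  ⟨ht, by simp [sum_add_distrib, ← mul_sum, hx.2, hd]⟩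

lemma eventually_add_smul_mem_stdSimplex (hx : x ∈ stdSimplex ℝ V) (hpos : ∀ v, 0 < x v)
    (hd : ∑ v, d v = 0) : ∀ᶠ t in 𝓝 (0 : ℝ), x + t • d ∈ stdSimplex ℝ V := by
  have hcont (v : V) : Tendsto (fun t : ℝ => x v + t * d v) (𝓝 0) (𝓝 (x v)) :=
    (continuous_const.add (continuous_id.mul continuous_const)).tendsto' _ _ (by simp)
  filter_upwards [eventually_all.2 fun v => (hcont v).eventually_const_lt (hpos v)] with t ht
  exact add_smul_mem_stdSimplex hx hd fun v => (ht v).le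

lemma exists_add_smul_mem_stdSimplex_eq_zero (hx : x ∈ stdSimplex ℝ V) (hd : ∑ v, d v = 0)
    (hd0 : d ≠ 0) : ∃ t : ℝ, x + t • d ∈ stdSimplex ℝ V ∧ ∃ v, (x + t • d) v = 0 := by
  obtain ⟨v₁, hv₁⟩ : ∃ v, d v < 0 := by
    by_contra! h
    exact hd0 (funext fun v => (sum_eq_zero_iff_of_nonneg fun v _ => h v).1 hd v (mem_univ v))
  obtain ⟨v₀, hv₀, hmin⟩ :=
    exists_min_image (univ.filter fun v => d v < 0) (fun v => x v / -d v) ⟨v₁, by simpa using hv₁⟩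
  have hdv₀ : d v₀ < 0 := (mem_filter.1 hv₀).2
  set t := x v₀ / -d v₀
  have ht : 0 ≤ t := div_nonneg (hx.1 v₀) (by linarith)
  refine ⟨t, add_smul_mem_stdSimplex hx hd fun v => ?_, v₀, ?_⟩
  · rcases lt_or_ge (d v) 0 with hv | hv
    · have := hmin v (mem_filter.2 ⟨mem_univ v, hv⟩)
      rw [le_div_iff₀ (by linarith)] at this
      linarith
    · nlinarith [hx.1 v]
  · simp only [Pi.add_apply, Pi.smul_apply, smul_eq_mul, t]
    have := hdv₀.ne
    field_simp
    ring

end StdSimplex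

namespace Matrix.IsSymm

variable {V : Type*} [Fintype V] {A : Matrix V V ℝ} {x : V → ℝ}

lemma dotProduct_mulVec_eq_zero_of_isMinOn (hA : A.IsSymm)
    (hmin : IsMinOn (fun y => y ⬝ᵥ A *ᵥ y) (stdSimplex ℝ V) x) (hx : x ∈ stdSimplex ℝ V)
    (hpos : ∀ v, 0 < x v) {d : V → ℝ} (hd : ∑ v, d v = 0) : d ⬝ᵥ A *ᵥ x = 0 := by
  have hloc : IsLocalMin
      (fun t : ℝ => x ⬝ᵥ A *ᵥ x + 2 * t * (d ⬝ᵥ A *ᵥ x) + t ^ 2 * (d ⬝ᵥ A *ᵥ d)) 0 := by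
    filter_upwards [eventually_add_smul_mem_stdSimplex hx hpos hd] with t ht
    simpa [hA.dotProduct_mulVec_add_smul] using isMinOn_iff.1 hmin _ ht
  have hderiv : HasDerivAt
      (fun t : ℝ => x ⬝ᵥ A *ᵥ x + 2 * t * (d ⬝ᵥ A *ᵥ x) + t ^ 2 * (d ⬝ᵥ A *ᵥ d))
      (2 * (d ⬝ᵥ A *ᵥ x)) 0 := by
    refine (((((hasDerivAt_id' (0 : ℝ)).const_mul 2).mul_const (d ⬝ᵥ A *ᵥ x)).const_add
      (x ⬝ᵥ A *ᵥ x)).add ((hasDerivAt_pow 2 (0 : ℝ)).mul_const (d ⬝ᵥ A *ᵥ d))).congr_deriv ?_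
    norm_num
  linarith [hloc.hasDerivAt_eq_zero hderiv]

lemma mulVec_apply_eq_of_isMinOn (hA : A.IsSymm)
    (hmin : IsMinOn (fun y => y ⬝ᵥ A *ᵥ y) (stdSimplex ℝ V) x) (hx : x ∈ stdSimplex ℝ V)
    (hpos : ∀ v, 0 < x v) (v : V) : (A *ᵥ x) v = x ⬝ᵥ A *ᵥ x := by
  classical
  have h := hA.dotProduct_mulVec_eq_zero_of_isMinOn hmin hx hpos
    (d := Pi.single v 1 - x) (by simp [sum_sub_distrib, hx.2])
  rw [sub_dotProduct, single_dotProduct, one_mul] at h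
  linarith

lemma posDefOnSumZero_of_isMinOn (hA : A.IsSymm)
    (hmin : IsMinOn (fun y => y ⬝ᵥ A *ᵥ y) (stdSimplex ℝ V) x) (hx : x ∈ stdSimplex ℝ V)
    (hpos : ∀ y ∈ stdSimplex ℝ V, IsMinOn (fun y => y ⬝ᵥ A *ᵥ y) (stdSimplex ℝ V) y →
      ∀ v, 0 < y v) :
    A.PosDefOnSumZero := by
  intro d hd hd0
  have hx0 := hpos x hx hmin
  have hquad (t : ℝ) :
      (x + t • d) ⬝ᵥ A *ᵥ (x + t • d) = x ⬝ᵥ A *ᵥ x + t ^ 2 * (d ⬝ᵥ A *ᵥ d) := by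
    rw [hA.dotProduct_mulVec_add_smul, hA.dotProduct_mulVec_eq_zero_of_isMinOn hmin hx hx0 hd]
    ring
  obtain ⟨t, ht, ht0⟩ := ((eventually_add_smul_mem_stdSimplex hx hx0 hd).filter_mono
    nhdsWithin_le_nhds).and self_mem_nhdsWithin |>.exists (f := 𝓝[≠] (0 : ℝ))
  have hnonneg : 0 ≤ d ⬝ᵥ A *ᵥ d := by
    have := isMinOn_iff.1 hmin _ ht
    rw [hquad] at this
    exact nonneg_of_mul_nonneg_right (by linarith) (sq_pos_of_ne_zero ht0)
  refine hnonneg.lt_of_ne fun hzero => ?_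
  obtain ⟨s, hs, v, hv⟩ := exists_add_smul_mem_stdSimplex_eq_zero hx hd hd0
  have hsmin : IsMinOn (fun y => y ⬝ᵥ A *ᵥ y) (stdSimplex ℝ V) (x + s • d) := by
    refine isMinOn_iff.2 fun y hy => ?_
    simp only [hquad, ← hzero, mul_zero, add_zero]
    exact isMinOn_iff.1 hmin y hy
  exact (hpos _ hs hsmin v).ne' hv

end Matrix.IsSymm

namespace CRG

variable {V : Type} [Fintype V] [DecidableEq V] (K : CRG V)

lemma M_self (p : ℝ) (v : V) : K.M p v v = if K.vWhite v then p else 1 - p := if_pos rfl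

lemma M_of_ne (p : ℝ) {u v : V} (h : u ≠ v) :
    K.M p u v = match K.ecolor u v with
      | .white => p
      | .black => 1 - p
      | .gray => 0 := if_neg h

lemma M_nonneg {p : ℝ} (hp : p ∈ Set.Icc (0 : ℝ) 1) (u v : V) : 0 ≤ K.M p u v := by
  obtain ⟨hp0, hp1⟩ := hp
  by_cases h : u = v
  · rw [h, M_self]; split <;> linarith
  · rw [M_of_ne K p h]; split <;> linarith

noncomputable def matrix (p : ℝ) : Matrix V V ℝ := Matrix.of (K.M p)

@[simp]
lemma matrix_apply (p : ℝ) (u v : V) : K.matrix p u v = K.M p u v := rfl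

lemma matrix_isSymm (p : ℝ) : (K.matrix p).IsSymm :=
  IsSymm.ext fun u v => by
    by_cases h : u = v
    · rw [h]
    · rw [matrix_apply, matrix_apply, M_of_ne K p h, M_of_ne K p (Ne.symm h), K.ecolor_symm]

lemma sum_sum_mul_M_mul_eq (p : ℝ) (x : V → ℝ) :
    ∑ u, ∑ v, x u * K.M p u v * x v = x ⬝ᵥ K.matrix p *ᵥ x := by
  simp only [dotProduct, mulVec, matrix_apply, mul_sum, mul_assoc]

lemma M_sub (p : ℝ) (s : Finset V) (u v : {v // v ∈ s}) : (K.sub s).M p u v = K.M p u v := by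
  by_cases h : u = v
  · subst h; exact (M_self _ p u).trans (M_self K p u).symm
  · exact (M_of_ne _ p h).trans (M_of_ne K p (Subtype.coe_ne_coe.2 h)).symm

lemma mulVec_matrix_apply (p : ℝ) (x : V → ℝ) (v : V) :
    (K.matrix p *ᵥ x) v = p * K.dW x v + (1 - p) * K.dB x v := by
  have hself (c : ℝ → ℝ) : c (x v) = ∑ w, if w = v then c (x w) else 0 := by simp
  rw [dW, dB, sum_filter, sum_filter, hself (fun t => if K.vWhite v then t else 0),
    hself (fun t => if K.vWhite v then 0 else t), ← sum_add_distrib, ← sum_add_distrib,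
    mul_sum, mul_sum, ← sum_add_distrib]
  refine sum_congr rfl fun w _ => ?_
  simp only [matrix_apply]
  by_cases h : w = v
  · subst h
    rw [M_self]
    cases K.vWhite w <;> simp
  · rw [M_of_ne K p (Ne.symm h)]
    cases K.ecolor v w <;> simp [h]

lemma dW_add_dB_add_dG (x : V → ℝ) (v : V) : K.dW x v + K.dB x v + K.dG x v = ∑ w, x w := by
  have hself (c : ℝ → ℝ) : c (x v) = ∑ w, if w = v then c (x w) else 0 := by simp
  rw [dW, dB, dG, sum_filter, sum_filter, sum_filter, hself (fun t => if K.vWhite v then t else 0),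
    hself (fun t => if K.vWhite v then 0 else t), ← sum_add_distrib, ← sum_add_distrib,
    ← sum_add_distrib, ← sum_add_distrib]
  refine sum_congr rfl fun w _ => ?_
  by_cases h : w = v
  · subst h
    cases K.vWhite w <;> simp
  · cases K.ecolor v w <;> simp [h]

variable {K} {p : ℝ} {x : V → ℝ}

lemma g_le (hp : p ∈ Set.Icc (0 : ℝ) 1) (hx : x ∈ stdSimplex ℝ V) :
    K.g p ≤ x ⬝ᵥ K.matrix p *ᵥ x := by
  refine csInf_le ⟨0, ?_⟩ ⟨x, hx.1, hx.2, (K.sum_sum_mul_M_mul_eq p x).symm⟩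
  rintro r ⟨y, hy, -, rfl⟩
  exact sum_nonneg fun u _ => sum_nonneg fun v _ =>
    mul_nonneg (mul_nonneg (hy u) (K.M_nonneg hp u v)) (hy v)

lemma le_g_of_isMinOn (hmin : IsMinOn (fun y => y ⬝ᵥ K.matrix p *ᵥ y) (stdSimplex ℝ V) x)
    (hx : x ∈ stdSimplex ℝ V) : x ⬝ᵥ K.matrix p *ᵥ x ≤ K.g p := by
  refine le_csInf ⟨_, x, hx.1, hx.2, rfl⟩ ?_
  rintro r ⟨y, hy0, hy1, rfl⟩
  rw [sum_sum_mul_M_mul_eq]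
  exact isMinOn_iff.1 hmin y ⟨hy0, hy1⟩

lemma IsOptWeight.mem_stdSimplex (hx : K.IsOptWeight p x) : x ∈ stdSimplex ℝ V :=
  ⟨hx.1, hx.2.1⟩

lemma IsOptWeight.isMinOn (hp : p ∈ Set.Icc (0 : ℝ) 1) (hx : K.IsOptWeight p x) :
    IsMinOn (fun y => y ⬝ᵥ K.matrix p *ᵥ y) (stdSimplex ℝ V) x :=
  isMinOn_iff.2 fun _ hy => by
    rw [← sum_sum_mul_M_mul_eq, hx.2.2]
    exact g_le hp hy

lemma g_sub_le (hp : p ∈ Set.Icc (0 : ℝ) 1) {s : Finset V} (hx : x ∈ stdSimplex ℝ V)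
    (hxs : ∀ v ∉ s, x v = 0) : (K.sub s).g p ≤ x ⬝ᵥ K.matrix p *ᵥ x := by
  have hsum (f : V → ℝ) (hf : ∀ v ∉ s, f v = 0) : ∑ v : s, f v = ∑ v, f v :=
    (sum_coe_sort s f).trans (sum_subset (subset_univ s) fun v _ hv => hf v hv)
  have hxs' : (fun v : s => x v) ∈ stdSimplex ℝ s := ⟨fun v => hx.1 v, (hsum x hxs).trans hx.2⟩
  refine (g_le hp hxs').trans_eq ?_
  simp only [← sum_sum_mul_M_mul_eq, M_sub]
  calc ∑ u : s, ∑ v : s, x u * K.M p u v * x v = ∑ u : s, ∑ v, x u * K.M p u v * x v :=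
        sum_congr rfl fun u _ =>
          hsum (fun v => x u * K.M p u v * x v) fun v hv => by simp [hxs v hv]
    _ = ∑ u, ∑ v, x u * K.M p u v * x v :=
        hsum (fun u => ∑ v, x u * K.M p u v * x v) fun u hu => by simp [hxs u hu]

lemma IsPCore.pos_of_isMinOn (hcore : K.IsPCore p) (hp : p ∈ Set.Icc (0 : ℝ) 1)
    (hmin : IsMinOn (fun y => y ⬝ᵥ K.matrix p *ᵥ y) (stdSimplex ℝ V) x)
    (hx : x ∈ stdSimplex ℝ V) (v : V) : 0 < x v := by
  refine (hx.1 v).lt_of_ne fun hv => ?_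
  have hsum : ∑ w ∈ univ.erase v, x w = 1 := by rw [sum_erase _ hv.symm, hx.2]
  have hlt := hcore (univ.erase v) (nonempty_of_sum_ne_zero (by rw [hsum]; exact one_ne_zero))
    (erase_ssubset (mem_univ v)).ne
  have hle := g_sub_le (K := K) hp hx (s := univ.erase v) fun w hw => by
    rw [show w = v by simpa using hw, ← hv]
  linarith [le_g_of_isMinOn hmin hx]

lemma IsPCore.posDefOnSumZero (hcore : K.IsPCore p) (hp : p ∈ Set.Icc (0 : ℝ) 1)
    (hx : K.IsOptWeight p x) : (K.matrix p).PosDefOnSumZero :=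
  (K.matrix_isSymm p).posDefOnSumZero_of_isMinOn (hx.isMinOn hp) hx.mem_stdSimplex
    fun _ hys hy => hcore.pos_of_isMinOn hp hy hys

lemma IsPCore.mulVec_apply_eq_g (hcore : K.IsPCore p) (hp : p ∈ Set.Icc (0 : ℝ) 1)
    (hx : K.IsOptWeight p x) (v : V) : (K.matrix p *ᵥ x) v = K.g p := by
  rw [(K.matrix_isSymm p).mulVec_apply_eq_of_isMinOn (hx.isMinOn hp) hx.mem_stdSimplex
    (hcore.pos_of_isMinOn hp (hx.isMinOn hp) hx.mem_stdSimplex), ← sum_sum_mul_M_mul_eq, hx.2.2]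

lemma M_self_le (hp2 : p ≤ 1 / 2) (v : V) : K.M p v v ≤ 1 - p := by
  rw [M_self]; split <;> linarith

lemma ecolor_ne_black (hp2 : p ≤ 1 / 2) (hPD : (K.matrix p).PosDefOnSumZero) {u v : V}
    (huv : u ≠ v) : K.ecolor u v ≠ .black := by
  intro hc
  have hquad := hPD (Pi.single u 1 - Pi.single v 1) (by simp [sum_sub_distrib])
    fun h => by simpa [huv] using congrFun h u
  have huv' : K.M p u v = 1 - p := by rw [M_of_ne K p huv, hc]
  have hvu' : K.M p v u = 1 - p := by rw [M_of_ne K p huv.symm, K.ecolor_symm, hc]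
  simp only [sub_dotProduct, single_dotProduct, mulVec_sub, mulVec_single_one, one_mul,
    Pi.sub_apply, col_apply, matrix_apply, huv', hvu'] at hquad
  linarith [M_self_le (K := K) hp2 u, M_self_le (K := K) hp2 v]

lemma dB_eq_of_le_half (hp2 : p ≤ 1 / 2) (hPD : (K.matrix p).PosDefOnSumZero) (v : V) :
    K.dB x v = if K.vWhite v then 0 else x v := by
  rw [dB, filter_false_of_mem fun w _ h => ecolor_ne_black hp2 hPD (Ne.symm h.1) h.2, sum_empty,
    zero_add]

lemma ecolor_ne_white_of_vWhite (hp : p ∈ Set.Icc (0 : ℝ) (1 / 2))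
    (hPD : (K.matrix p).PosDefOnSumZero) (hpos : ∀ v, 0 < x v) {c : ℝ}
    (hrow : ∀ v, (K.matrix p *ᵥ x) v = c) {u w : V} (hu : K.vWhite u = true) (hwu : w ≠ u) :
    K.ecolor u w ≠ .white := by
  intro hc
  set N := univ.filter fun z => z ≠ u ∧ K.ecolor u z = .white
  set b : V → ℝ := fun z => if z ∈ N then x z else 0
  set S := ∑ z ∈ N, x z
  have huN : u ∉ N := by simp [N]
  have hS : 0 < S := sum_pos (fun z _ => hpos z) ⟨w, by simp [N, hwu, hc]⟩
  have hMN (z : V) (hz : z ∈ N) : K.M p u z = p := by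
    obtain ⟨hzu, hzc⟩ := (mem_filter.1 hz).2
    rw [M_of_ne K p (Ne.symm hzu), hzc]
  have hc_eq : c = p * (x u + S) := by
    rw [← hrow u, mulVec_matrix_apply, dB_eq_of_le_half hp.2 hPD, dW, if_pos hu, if_pos hu]
    ring
  have hMb : (K.matrix p *ᵥ b) u = p * S := by
    simp only [mulVec, dotProduct, b, matrix_apply, mul_ite, mul_zero, sum_ite_mem, univ_inter]
    exact (sum_congr rfl fun z hz => by rw [hMN z hz]).trans (mul_sum N x p).symm
  -- every `z ∈ N` sees `u` with weight `p`, so `(M b)(z) ≤ c - p x(u) = p S`; then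
  -- `(S e_u - b)ᵀ M (S e_u - b) ≤ p S² - 2 p S² + p S² = 0`
  have hbMb : b ⬝ᵥ K.matrix p *ᵥ b ≤ S * (p * S) := by
    have hM : ∀ i j, 0 ≤ K.matrix p i j := K.M_nonneg ⟨hp.1, by linarith [hp.2]⟩
    refine (dotProduct_mulVec_restrict_le hM (fun v => (hpos v).le) huN).trans_eq ?_
    rw [sum_mul]
    refine sum_congr rfl fun z hz => ?_
    rw [hrow, (K.matrix_isSymm p).apply, matrix_apply, hMN z hz, hc_eq]
    ring
  have hd : ∑ z, (S • Pi.single u 1 - b : V → ℝ) z = 0 := by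
    simp [sum_sub_distrib, b, sum_ite_mem, ← mul_sum, S]
  have hd0 : (S • Pi.single u 1 - b : V → ℝ) ≠ 0 := fun h => by
    simpa [b, huN, hS.ne'] using congrFun h u
  have hquad := hPD _ hd hd0
  rw [show (S • Pi.single u 1 - b : V → ℝ) = -b + S • Pi.single u 1 by abel,
    (K.matrix_isSymm p).dotProduct_mulVec_add_smul] at hquad
  simp only [neg_dotProduct, mulVec_neg, dotProduct_neg, neg_neg, single_dotProduct, one_mul,
    hMb, mulVec_single_one, col_apply, matrix_apply, M_self, if_pos hu] at hquad
  nlinarith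

theorem IsPCore.localization_of_le_half (hcore : K.IsPCore p) (hp : p ∈ Set.Ioo (0 : ℝ) 1)
    (hp2 : p ≤ 1 / 2) (hx : K.IsOptWeight p x) :
    (∀ v, K.vWhite v = true → x v = K.g p / p) ∧
      (∀ v, K.vWhite v = false → K.dG x v = (p - K.g p) / p + ((1 - 2 * p) / p) * x v) := by
  have hp' : p ∈ Set.Icc (0 : ℝ) 1 := Set.Ioo_subset_Icc_self hp
  have hPD := hcore.posDefOnSumZero hp' hx
  have hrow := hcore.mulVec_apply_eq_g hp' hx
  have hpos := hcore.pos_of_isMinOn hp' (hx.isMinOn hp') hx.mem_stdSimplex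
  refine ⟨fun v hv => ?_, fun v hv => ?_⟩
  · have hdW : K.dW x v = x v := by
      rw [dW, filter_false_of_mem fun w _ h =>
        ecolor_ne_white_of_vWhite ⟨hp.1.le, hp2⟩ hPD hpos hrow hv h.1 h.2, sum_empty, zero_add,
        if_pos hv]
    have := hrow v
    rw [mulVec_matrix_apply, hdW, dB_eq_of_le_half hp2 hPD, if_pos hv] at this
    rw [eq_div_iff hp.1.ne']
    linarith
  · have hg := hrow v
    rw [mulVec_matrix_apply, dB_eq_of_le_half hp2 hPD, if_neg (by simp [hv])] at hg
    have hsum := K.dW_add_dB_add_dG x v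
    rw [dB_eq_of_le_half hp2 hPD, if_neg (by simp [hv]), hx.2.1] at hsum
    have hp0 := hp.1.ne'
    field_simp
    linear_combination p * hsum - hg

end CRG

def EColor.swap : EColor → EColor
  | .white => .black
  | .black => .white
  | .gray => .gray

@[simp]
lemma EColor.swap_eq_gray {c : EColor} : c.swap = .gray ↔ c = .gray := by
  cases c <;> simp [EColor.swap]

namespace CRG

variable {V : Type} [Fintype V]

def swap (K : CRG V) : CRG V where
  vWhite v := !K.vWhite v
  ecolor u v := (K.ecolor u v).swap
  ecolor_symm u v := congrArg EColor.swap (K.ecolor_symm u v)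

@[simp]
lemma vWhite_swap (K : CRG V) (v : V) : K.swap.vWhite v = !K.vWhite v := rfl

lemma sub_swap (K : CRG V) (s : Finset V) : (K.sub s).swap = K.swap.sub s := rfl

variable [DecidableEq V]

lemma M_swap (K : CRG V) (p : ℝ) : K.swap.M (1 - p) = K.M p := by
  funext u v
  by_cases h : u = v
  · subst h
    rw [M_self, M_self]
    cases hu : K.vWhite u <;> simp [swap, hu]
  · rw [M_of_ne _ _ h, M_of_ne _ _ h]
    cases hc : K.ecolor u v <;> simp [swap, hc, EColor.swap]

lemma g_swap (K : CRG V) (p : ℝ) : K.swap.g (1 - p) = K.g p := by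
  rw [g, g, M_swap]

lemma dG_swap (K : CRG V) (x : V → ℝ) (v : V) : K.swap.dG x v = K.dG x v := by
  simp only [dG, swap, EColor.swap_eq_gray]

variable {K : CRG V} {p : ℝ} {x : V → ℝ}

lemma IsPCore.swap (hcore : K.IsPCore p) : K.swap.IsPCore (1 - p) := fun s hs hsu => by
  rw [g_swap, ← sub_swap, g_swap]
  exact hcore s hs hsu

lemma IsOptWeight.swap (hx : K.IsOptWeight p x) : K.swap.IsOptWeight (1 - p) x := by
  rwa [IsOptWeight, M_swap, g_swap]

end CRG

theorem pcore_localization_general {V : Type} [Fintype V] [DecidableEq V]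
    (p : ℝ) (hp : p ∈ Set.Ioo (0 : ℝ) 1) (K : CRG V) (hcore : K.IsPCore p)
    (x : V → ℝ) (hx : K.IsOptWeight p x) :
    (p ≤ 1 / 2 →
      (∀ v : V, K.vWhite v = true → x v = K.g p / p) ∧
      (∀ v : V, K.vWhite v = false →
        K.dG x v = (p - K.g p) / p + ((1 - 2 * p) / p) * x v)) ∧
    (1 / 2 ≤ p →
      (∀ v : V, K.vWhite v = false → x v = K.g p / (1 - p)) ∧
      (∀ v : V, K.vWhite v = true →
        K.dG x v = (1 - p - K.g p) / (1 - p) + ((2 * p - 1) / (1 - p)) * x v)) := by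
  refine ⟨fun hp2 => hcore.localization_of_le_half hp hp2 hx, fun hp2 => ?_⟩
  have hq : 1 - p ∈ Set.Ioo (0 : ℝ) 1 := ⟨by linarith [hp.2], by linarith [hp.1]⟩
  obtain ⟨hblack, hwhite⟩ := hcore.swap.localization_of_le_half hq (by linarith) hx.swap
  rw [CRG.g_swap] at hblack hwhite
  refine ⟨fun v hv => hblack v (by simp [hv]), fun v hv => ?_⟩
  rw [← CRG.dG_swap, hwhite v (by simp [hv])]
  ring

theorem pcore_localization {V : Type} [Fintype V] [DecidableEq V] [Nonempty V]
    (p : ℝ) (hp : p ∈ Set.Ioo (0 : ℝ) 1) (K : CRG V) (hcore : K.IsPCore p)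
    (x : V → ℝ) (hx : K.IsOptWeight p x) :
    (p ≤ 1 / 2 →
      (∀ v : V, K.vWhite v = true → x v = K.g p / p) ∧
      (∀ v : V, K.vWhite v = false →
        K.dG x v = (p - K.g p) / p + ((1 - 2 * p) / p) * x v)) ∧
    (1 / 2 ≤ p →
      (∀ v : V, K.vWhite v = false → x v = K.g p / (1 - p)) ∧
      (∀ v : V, K.vWhite v = true →
        K.dG x v = (1 - p - K.g p) / (1 - p) + ((2 * p - 1) / (1 - p)) * x v)) :=
  pcore_localization_general p hp K hcore x hx
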